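/- arXiv:0910.0405 — 7 statements merged into one kernel-verified Lean document; each statement's English description precedes it below -/
import Mathlib

section
/- For every ρ ∈ (−1, 1), the quadrant probability of the standard bivariate normal distribution with correlation ρ satisfies ∫₀^∞ ∫₀^∞ φ_ρ(x, y) dx dy = (1/(2π)) · (π/2 + arctan(ρ / √(1 − ρ²))). -/
open Real Set MeasureTheory Filter

/-! Substituting `y = x v` in the inner integral turns the integrand into
`x * exp (-(1 + ((v - ρ) / s) ^ 2) / 2 * x ^ 2)` with `s = √(1 - ρ ^ 2)`. After exchanging the
integrals, the `x`-integral is elementary, `∫₀^∞ x e^{-b x²} dx = 1 / (2b)`, and leaves the Cauchy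
density `(1 + ((v - ρ) / s) ^ 2)⁻¹`, whose integral over `v > 0` is `s (π / 2 + arctan (ρ / s))`. -/

theorem integral_Ioi_mul_exp_neg_mul_sq {b : ℝ} (hb : 0 < b) :
    ∫ x in Ioi (0 : ℝ), x * exp (-b * x ^ 2) = (2 * b)⁻¹ := by
  have h := integral_mul_cexp_neg_mul_sq (b := (b : ℂ)) (by simpa using hb)
  simp only [← Complex.ofReal_pow, ← Complex.ofReal_neg, ← Complex.ofReal_mul,
    ← Complex.ofReal_exp] at h
  exact_mod_cast h

section Cauchy

variable {ρ s : ℝ}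

theorem integrable_inv_one_add_sq_sub_div (hs : s ≠ 0) :
    Integrable fun v : ℝ ↦ (1 + ((v - ρ) / s) ^ 2)⁻¹ :=
  (integrable_inv_one_add_sq.comp_div hs).comp_sub_right ρ

theorem integral_Ioi_inv_one_add_sq_sub_div (hs : 0 < s) (a : ℝ) :
    ∫ v in Ioi a, (1 + ((v - ρ) / s) ^ 2)⁻¹ = s * (π / 2 - arctan ((a - ρ) / s)) := by
  have hderiv (v : ℝ) : HasDerivAt (fun v ↦ s * arctan ((v - ρ) / s))
      ((1 + ((v - ρ) / s) ^ 2)⁻¹) v :=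
    ((hasDerivAt_arctan' _).comp v (((hasDerivAt_id v).sub_const ρ).div_const s)).const_mul s
      |>.congr_deriv (by simp only [id]; field_simp)
  have hlim : Tendsto (fun v ↦ s * arctan ((v - ρ) / s)) atTop (nhds (s * (π / 2))) :=
    ((tendsto_nhds_of_tendsto_nhdsWithin tendsto_arctan_atTop).comp
      ((tendsto_atTop_add_const_right _ (-ρ) tendsto_id).atTop_div_const hs)).const_mul s
  rw [integral_Ioi_of_hasDerivAt_of_tendsto' (fun v _ ↦ hderiv v)
    (integrable_inv_one_add_sq_sub_div hs.ne').integrableOn hlim]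
  ring

end Cauchy

noncomputable def quadrantKernel (ρ s : ℝ) (p : ℝ × ℝ) : ℝ :=
  p.1 * exp (-((1 + ((p.2 - ρ) / s) ^ 2) / 2) * p.1 ^ 2)

section QuadrantKernel

variable {ρ s : ℝ}

theorem continuous_quadrantKernel : Continuous (quadrantKernel ρ s) := by
  unfold quadrantKernel; fun_prop

theorem integral_Ioi_quadrantKernel_fst (v : ℝ) :
    ∫ x in Ioi (0 : ℝ), quadrantKernel ρ s (x, v) = (1 + ((v - ρ) / s) ^ 2)⁻¹ := by
  simp only [quadrantKernel]
  rw [integral_Ioi_mul_exp_neg_mul_sq (by positivity)]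
  ring

theorem integrable_quadrantKernel (hs : s ≠ 0) :
    Integrable (quadrantKernel ρ s) ((volume.restrict (Ioi 0)).prod (volume.restrict (Ioi 0))) := by
  rw [integrable_prod_iff' continuous_quadrantKernel.aestronglyMeasurable]
  refine ⟨.of_forall fun v ↦ ?_, ?_⟩
  · simp only [quadrantKernel]
    exact (integrable_mul_exp_neg_mul_sq (by positivity)).integrableOn
  · have hnorm (v : ℝ) : ∫ x in Ioi (0 : ℝ), ‖quadrantKernel ρ s (x, v)‖ =
        (1 + ((v - ρ) / s) ^ 2)⁻¹ := by
      rw [← integral_Ioi_quadrantKernel_fst]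
      refine setIntegral_congr_fun measurableSet_Ioi fun x hx ↦ norm_of_nonneg ?_
      exact mul_nonneg hx.le (exp_pos _).le
    simp_rw [hnorm]
    exact (integrable_inv_one_add_sq_sub_div hs).integrableOn

theorem integral_Ioi_exp_neg_quadratic_eq (hs2 : s ^ 2 = 1 - ρ ^ 2) (hs : s ≠ 0) {x : ℝ}
    (hx : 0 < x) :
    ∫ y in Ioi (0 : ℝ), exp (-(x ^ 2 - 2 * ρ * x * y + y ^ 2) / (2 * (1 - ρ ^ 2))) =
      ∫ v in Ioi (0 : ℝ), quadrantKernel ρ s (x, v) := by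
  have hsub := integral_comp_mul_left_Ioi
    (fun y ↦ exp (-(x ^ 2 - 2 * ρ * x * y + y ^ 2) / (2 * (1 - ρ ^ 2)))) 0 hx
  rw [mul_zero, smul_eq_mul, eq_inv_mul_iff_mul_eq₀ hx.ne'] at hsub
  rw [← hsub, ← integral_const_mul]
  refine setIntegral_congr_fun measurableSet_Ioi fun v _ ↦ ?_
  rw [quadrantKernel, ← hs2]
  congr 2
  field_simp
  linear_combination hs2

end QuadrantKernel

theorem integral_Ioi_integral_Ioi_exp_neg_quadratic {ρ : ℝ} (hρ : ρ ^ 2 < 1) :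
    ∫ x in Ioi (0 : ℝ), ∫ y in Ioi (0 : ℝ), exp (-(x ^ 2 - 2 * ρ * x * y + y ^ 2) / (2 * (1 - ρ ^ 2)))
      = √(1 - ρ ^ 2) * (π / 2 + arctan (ρ / √(1 - ρ ^ 2))) := by
  set s := √(1 - ρ ^ 2)
  have hs : 0 < s := sqrt_pos.mpr (by linarith)
  have hs2 : s ^ 2 = 1 - ρ ^ 2 := sq_sqrt (by linarith)
  calc _ = ∫ x in Ioi (0 : ℝ), ∫ v in Ioi (0 : ℝ), quadrantKernel ρ s (x, v) :=
        setIntegral_congr_fun measurableSet_Ioi fun x hx ↦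
          integral_Ioi_exp_neg_quadratic_eq hs2 hs.ne' hx
    _ = ∫ v in Ioi (0 : ℝ), ∫ x in Ioi (0 : ℝ), quadrantKernel ρ s (x, v) :=
        integral_integral_swap (integrable_quadrantKernel hs.ne')
    _ = ∫ v in Ioi (0 : ℝ), (1 + ((v - ρ) / s) ^ 2)⁻¹ := by
        simp_rw [integral_Ioi_quadrantKernel_fst]
    _ = s * (π / 2 + arctan (ρ / s)) := by
        rw [integral_Ioi_inv_one_add_sq_sub_div hs, zero_sub, neg_div, arctan_neg, sub_neg_eq_add]

theorem bivariate_normal_quadrant_probability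
    (ρ : ℝ) (hρ : ρ ∈ Set.Ioo (-1 : ℝ) 1) :
    ∫ x in Set.Ioi (0:ℝ), ∫ y in Set.Ioi (0:ℝ),
      (1 / (2 * π * Real.sqrt (1 - ρ^2))) *
        Real.exp (-(x^2 - 2*ρ*x*y + y^2) / (2 * (1 - ρ^2)))
    = (1 / (2 * π)) * (π / 2 + Real.arctan (ρ / Real.sqrt (1 - ρ^2))) := by
  have hρ2 : ρ ^ 2 < 1 := by rw [sq_lt_one_iff_abs_lt_one, abs_lt]; exact hρ
  have hs : 0 < √(1 - ρ ^ 2) := sqrt_pos.mpr (by linarith)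
  simp_rw [integral_const_mul]
  rw [integral_Ioi_integral_Ioi_exp_neg_quadratic hρ2]
  field_simp
end

section
/- For every ρ ∈ (−1, 1), ∫₀^∞ ∫₀^∞ x y φ_ρ(x, y) dx dy = (1/(2π)) √(1 − ρ²) + ρ · ∫₀^∞ ∫₀^∞ φ_ρ(x, y) dx dy. Equivalently, if (X, Y) has the standard bivariate normal distribution with correlation ρ, then E(X₊ Y₊) = √(1 − ρ²)/(2π) + ρ · P(X > 0, Y > 0), where x₊ = max(x, 0). -/
/-!
Conditionally on `X = x`, `Y` is `N(ρx, 1 - ρ²)`, so splitting `y = (y - ρx) + ρx` makes both inner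
integrals over `y > 0` explicit in terms of the Gaussian distribution function. This gives
`E(X₊Y₊) = (1 - ρ²)^{3/2}/(2π) + ρ E(X₊² 1{Y > 0})`. Gaussian integration by parts in `x` on the
half-line, where both boundary terms vanish, gives
`E(X₊² 1{Y > 0}) = P(X > 0, Y > 0) + ρ √(1 - ρ²)/(2π)`, and
`(1 - ρ²)^{3/2} + ρ² √(1 - ρ²) = √(1 - ρ²)`.
-/

open Real Set MeasureTheory Filter Topology

section Gaussian

variable {v : ℝ}

lemma exp_neg_sq_div_eq (v u : ℝ) : exp (-u ^ 2 / (2 * v)) = exp (-(2 * v)⁻¹ * u ^ 2) := by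
  ring_nf

lemma integrable_exp_neg_sq_div (hv : 0 < v) :
    Integrable fun u : ℝ => exp (-u ^ 2 / (2 * v)) := by
  simpa only [exp_neg_sq_div_eq] using integrable_exp_neg_mul_sq (by positivity : 0 < (2 * v)⁻¹)

lemma integrable_mul_exp_neg_sq_div (hv : 0 < v) :
    Integrable fun u : ℝ => u * exp (-u ^ 2 / (2 * v)) := by
  simpa only [exp_neg_sq_div_eq] using
    integrable_mul_exp_neg_mul_sq (by positivity : 0 < (2 * v)⁻¹)

lemma integrable_sq_mul_exp_neg_sq_div (hv : 0 < v) :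
    Integrable fun u : ℝ => u ^ 2 * exp (-u ^ 2 / (2 * v)) := by
  simpa only [exp_neg_sq_div_eq, rpow_two] using
    integrable_rpow_mul_exp_neg_mul_sq (by positivity : 0 < (2 * v)⁻¹) (s := 2) (by norm_num)

lemma hasDerivAt_exp_neg_sq_div (v u : ℝ) :
    HasDerivAt (fun u => exp (-u ^ 2 / (2 * v))) (-(u / v) * exp (-u ^ 2 / (2 * v))) u :=
  ((hasDerivAt_pow 2 u).neg.div_const (2 * v)).exp.congr_deriv
    (by simp only [Pi.neg_apply]; push_cast; ring)

lemma integral_comp_sub_Ioi {E : Type*} [NormedAddCommGroup E] [NormedSpace ℝ E]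
    (f : ℝ → E) (a c : ℝ) :
    ∫ y in Ioi a, f (y - c) = ∫ u in Ioi (a - c), f u := by
  have := (measurePreserving_sub_right volume c).setIntegral_preimage_emb
    (measurableEmbedding_subRight c) f (Ioi (a - c))
  simpa using this

lemma integral_Ioi_mul_exp_neg_sq_div (hv : 0 < v) (a : ℝ) :
    ∫ u in Ioi a, u * exp (-u ^ 2 / (2 * v)) = v * exp (-a ^ 2 / (2 * v)) := by
  have hderiv : ∀ u, HasDerivAt (fun u => -v * exp (-u ^ 2 / (2 * v)))
      (u * exp (-u ^ 2 / (2 * v))) u := fun u =>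
    ((hasDerivAt_exp_neg_sq_div v u).const_mul (-v)).congr_deriv (by field_simp)
  have htendsto : Tendsto (fun u => -v * exp (-u ^ 2 / (2 * v))) atTop (𝓝 0) :=
    tendsto_zero_of_hasDerivAt_of_integrableOn_Ioi (a := a) (fun u _ => hderiv u)
      (integrable_mul_exp_neg_sq_div hv).integrableOn
      ((integrable_exp_neg_sq_div hv).const_mul _).integrableOn
  rw [integral_Ioi_of_hasDerivAt_of_tendsto' (fun u _ => hderiv u)
    (integrable_mul_exp_neg_sq_div hv).integrableOn htendsto]
  ring

lemma integral_Ioi_zero_mul_exp_neg_sq_div (hv : 0 < v) :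
    ∫ u in Ioi 0, u * exp (-u ^ 2 / (2 * v)) = v := by
  simp [integral_Ioi_mul_exp_neg_sq_div hv]

end Gaussian

/-- Not normalised: `gaussCdf v t` is `√(2πv)` times the distribution function of `N(0, v)`. -/
noncomputable def gaussCdf (v t : ℝ) : ℝ := ∫ u in Iic t, exp (-u ^ 2 / (2 * v))

section GaussCdf

variable {v : ℝ}

lemma gaussCdf_nonneg (v t : ℝ) : 0 ≤ gaussCdf v t :=
  integral_nonneg fun _ => (exp_pos _).le

lemma abs_gaussCdf_le (hv : 0 < v) (t : ℝ) : |gaussCdf v t| ≤ ∫ u, exp (-u ^ 2 / (2 * v)) := by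
  rw [abs_of_nonneg (gaussCdf_nonneg v t)]
  exact setIntegral_le_integral (integrable_exp_neg_sq_div hv) (.of_forall fun _ => (exp_pos _).le)

lemma hasDerivAt_gaussCdf (hv : 0 < v) (t : ℝ) :
    HasDerivAt (gaussCdf v) (exp (-t ^ 2 / (2 * v))) t := by
  have hint := integrable_exp_neg_sq_div hv
  have heq : gaussCdf v = fun t => (∫ u in (0 : ℝ)..t, exp (-u ^ 2 / (2 * v))) + gaussCdf v 0 := by
    funext t
    rw [← intervalIntegral.integral_Iic_sub_Iic hint.integrableOn hint.integrableOn, gaussCdf,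
      gaussCdf, sub_add_cancel]
  rw [heq]
  refine (intervalIntegral.integral_hasDerivAt_right hint.intervalIntegrable
    hint.aestronglyMeasurable.stronglyMeasurableAtFilter ?_).add_const _
  exact (continuous_exp.comp (by fun_prop)).continuousAt

lemma continuous_gaussCdf (hv : 0 < v) : Continuous (gaussCdf v) :=
  continuous_iff_continuousAt.2 fun t => (hasDerivAt_gaussCdf hv t).continuousAt

lemma integral_Ioi_exp_neg_sub_sq_div (v c : ℝ) :
    ∫ y in Ioi 0, exp (-(y - c) ^ 2 / (2 * v)) = gaussCdf v c := by
  rw [integral_comp_sub_Ioi (fun u => exp (-u ^ 2 / (2 * v))), gaussCdf, ← neg_neg c,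
    ← integral_comp_neg_Ioi]
  simp

lemma integral_Ioi_sub_mul_exp_neg_sub_sq_div (hv : 0 < v) (c : ℝ) :
    ∫ y in Ioi 0, (y - c) * exp (-(y - c) ^ 2 / (2 * v)) = v * exp (-c ^ 2 / (2 * v)) := by
  rw [integral_comp_sub_Ioi (fun u => u * exp (-u ^ 2 / (2 * v))),
    integral_Ioi_mul_exp_neg_sq_div hv, zero_sub, neg_sq]

end GaussCdf

lemma tendsto_mul_nhdsGT_zero_of_norm_le {f : ℝ → ℝ} {C : ℝ} (hf : ∀ x ∈ Ioi 0, ‖f x‖ ≤ C) :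
    Tendsto (fun x => x * f x) (𝓝[>] 0) (𝓝 0) :=
  (tendsto_id.mono_left nhdsWithin_le_nhds).zero_mul_isBoundedUnder_le
    (isBoundedUnder_of_eventually_le (eventually_nhdsWithin_of_forall hf))

lemma integral_Ioi_sq_mul_mul_exp_neg_sq_div_two {G g : ℝ → ℝ} {C : ℝ}
    (hG : ∀ x ∈ Ioi 0, HasDerivAt G (g x) x) (hGC : ∀ x ∈ Ioi 0, |G x| ≤ C)
    (hg : IntegrableOn (fun x => x * g x * exp (-x ^ 2 / 2)) (Ioi 0)) :
    ∫ x in Ioi 0, x ^ 2 * G x * exp (-x ^ 2 / 2) =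
      (∫ x in Ioi 0, G x * exp (-x ^ 2 / 2)) + ∫ x in Ioi 0, x * g x * exp (-x ^ 2 / 2) := by
  have hGmeas : AEStronglyMeasurable G (volume.restrict (Ioi 0)) :=
    ContinuousOn.aestronglyMeasurable (fun x hx => (hG x hx).continuousAt.continuousWithinAt)
      measurableSet_Ioi
  have mul_G : ∀ {f : ℝ → ℝ}, Integrable f → IntegrableOn (fun x => f x * G x) (Ioi 0) :=
    fun hf => hf.integrableOn.mul_bdd hGmeas ((ae_restrict_mem measurableSet_Ioi).mono hGC)
  -- integrate by parts with `u x = x * G x` and `w x = -exp (-x ^ 2 / 2)`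
  have hu : ∀ x ∈ Ioi (0 : ℝ), HasDerivAt (fun x => x * G x) (G x + x * g x) x :=
    fun x hx => ((hasDerivAt_id x).mul (hG x hx)).congr_deriv (by simp)
  have hw : ∀ x ∈ Ioi (0 : ℝ), HasDerivAt (fun x => -exp (-x ^ 2 / 2)) (x * exp (-x ^ 2 / 2)) x :=
    fun x _ => (hasDerivAt_pow 2 x).neg.div_const 2 |>.exp.neg.congr_deriv
      (by simp only [Pi.neg_apply]; push_cast; ring)
  have hG_exp : IntegrableOn (fun x => G x * exp (-x ^ 2 / 2)) (Ioi 0) := by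
    simpa [mul_comm] using mul_G (integrable_exp_neg_sq_div one_pos)
  have huw' : IntegrableOn (fun x => x * G x * (x * exp (-x ^ 2 / 2))) (Ioi 0) :=
    (mul_G (integrable_sq_mul_exp_neg_sq_div one_pos)).congr_fun
      (fun x _ => by simp only [mul_one]; ring) measurableSet_Ioi
  have hu'w : IntegrableOn (fun x => (G x + x * g x) * -exp (-x ^ 2 / 2)) (Ioi 0) :=
    (hG_exp.add hg).neg.congr_fun (fun x _ => by simp only [Pi.neg_apply, Pi.add_apply]; ring)
      measurableSet_Ioi
  have huw : IntegrableOn (fun x => x * G x * -exp (-x ^ 2 / 2)) (Ioi 0) :=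
    (mul_G (integrable_mul_exp_neg_sq_div one_pos)).neg.congr_fun
      (fun x _ => by simp only [Pi.neg_apply, mul_one]; ring) measurableSet_Ioi
  have h_zero : Tendsto (fun x => x * G x * -exp (-x ^ 2 / 2)) (𝓝[>] 0) (𝓝 0) := by
    refine (tendsto_mul_nhdsGT_zero_of_norm_le (C := C) fun x hx => ?_).congr
      fun x => (mul_assoc ..).symm
    rw [norm_mul, norm_neg, Real.norm_eq_abs, Real.norm_of_nonneg (exp_pos _).le]
    refine (mul_le_of_le_one_right (abs_nonneg _) (exp_le_one_iff.2 ?_)).trans (hGC x hx)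
    exact div_nonpos_of_nonpos_of_nonneg (neg_nonpos.2 (sq_nonneg x)) zero_le_two
  have h_infty : Tendsto (fun x => x * G x * -exp (-x ^ 2 / 2)) atTop (𝓝 0) :=
    tendsto_zero_of_hasDerivAt_of_integrableOn_Ioi (fun x hx => (hu x hx).mul (hw x hx))
      (hu'w.add huw') huw
  have parts := integral_Ioi_mul_deriv_eq_deriv_mul hu hw huw' hu'w h_zero h_infty
  calc ∫ x in Ioi 0, x ^ 2 * G x * exp (-x ^ 2 / 2)
      = ∫ x in Ioi 0, x * G x * (x * exp (-x ^ 2 / 2)) := by congr! 2 with x; ring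
    _ = ∫ x in Ioi 0, (G x * exp (-x ^ 2 / 2) + x * g x * exp (-x ^ 2 / 2)) := by
      rw [parts, sub_self, zero_sub, ← integral_neg]; congr! 2 with x; ring
    _ = _ := integral_add hG_exp hg

noncomputable def bivariateNormalPDF (ρ x y : ℝ) : ℝ :=
  1 / (2 * π * √(1 - ρ ^ 2)) * exp (-(x ^ 2 - 2 * ρ * x * y + y ^ 2) / (2 * (1 - ρ ^ 2)))

section BivariateNormal

variable {ρ : ℝ}

lemma exp_neg_sq_div_two_mul_exp_neg_mul_sq_div (hρ : 1 - ρ ^ 2 ≠ 0) (x : ℝ) :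
    exp (-x ^ 2 / 2) * exp (-(ρ * x) ^ 2 / (2 * (1 - ρ ^ 2))) =
      exp (-x ^ 2 / (2 * (1 - ρ ^ 2))) := by
  rw [← exp_add]
  congr 1
  field_simp
  ring

lemma bivariateNormalPDF_eq (hρ : 1 - ρ ^ 2 ≠ 0) (x y : ℝ) :
    bivariateNormalPDF ρ x y = 1 / (2 * π * √(1 - ρ ^ 2)) *
      (exp (-x ^ 2 / 2) * exp (-(y - ρ * x) ^ 2 / (2 * (1 - ρ ^ 2)))) := by
  rw [bivariateNormalPDF, ← exp_add]
  congr 2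
  field_simp
  ring

lemma integral_Ioi_bivariateNormalPDF (hρ : 1 - ρ ^ 2 ≠ 0) (x : ℝ) :
    ∫ y in Ioi 0, bivariateNormalPDF ρ x y =
      1 / (2 * π * √(1 - ρ ^ 2)) * (gaussCdf (1 - ρ ^ 2) (ρ * x) * exp (-x ^ 2 / 2)) := by
  simp_rw [bivariateNormalPDF_eq hρ, integral_const_mul, integral_Ioi_exp_neg_sub_sq_div, mul_comm]

lemma integral_Ioi_mul_bivariateNormalPDF (hρ : 0 < 1 - ρ ^ 2) (x : ℝ) :
    ∫ y in Ioi 0, y * bivariateNormalPDF ρ x y =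
      1 / (2 * π * √(1 - ρ ^ 2)) * ((1 - ρ ^ 2) * exp (-x ^ 2 / (2 * (1 - ρ ^ 2))) +
        ρ * x * gaussCdf (1 - ρ ^ 2) (ρ * x) * exp (-x ^ 2 / 2)) := by
  set c := 1 / (2 * π * √(1 - ρ ^ 2))
  have hint := (integrable_exp_neg_sq_div hρ).comp_sub_right (ρ * x)
  have hint_mul := (integrable_mul_exp_neg_sq_div hρ).comp_sub_right (ρ * x)
  calc ∫ y in Ioi 0, y * bivariateNormalPDF ρ x y
      = ∫ y in Ioi 0, c * exp (-x ^ 2 / 2) *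
          ((y - ρ * x) * exp (-(y - ρ * x) ^ 2 / (2 * (1 - ρ ^ 2))) +
            ρ * x * exp (-(y - ρ * x) ^ 2 / (2 * (1 - ρ ^ 2)))) := by
        congr! 2 with y
        rw [bivariateNormalPDF_eq hρ.ne']
        ring
    _ = c * exp (-x ^ 2 / 2) * ((1 - ρ ^ 2) * exp (-(ρ * x) ^ 2 / (2 * (1 - ρ ^ 2))) +
          ρ * x * gaussCdf (1 - ρ ^ 2) (ρ * x)) := by
        rw [integral_const_mul, integral_add hint_mul.integrableOn
          (hint.const_mul _).integrableOn, integral_const_mul,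
          integral_Ioi_sub_mul_exp_neg_sub_sq_div hρ, integral_Ioi_exp_neg_sub_sq_div]
    _ = _ := by
        rw [← exp_neg_sq_div_two_mul_exp_neg_mul_sq_div hρ.ne' x]
        ring

lemma integrable_sq_mul_gaussCdf_mul_exp (hρ : 0 < 1 - ρ ^ 2) :
    Integrable fun x => x ^ 2 * gaussCdf (1 - ρ ^ 2) (ρ * x) * exp (-x ^ 2 / 2) := by
  have := (integrable_sq_mul_exp_neg_sq_div one_pos).bdd_mul
    ((continuous_gaussCdf hρ).comp (continuous_const_mul ρ)).aestronglyMeasurable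
    (.of_forall fun x => (abs_gaussCdf_le hρ (ρ * x)))
  refine this.congr (.of_forall fun x => ?_)
  simp only [Function.comp_apply, mul_one]
  ring

lemma integral_Ioi_integral_Ioi_mul_mul_bivariateNormalPDF (hρ : 0 < 1 - ρ ^ 2) :
    ∫ x in Ioi 0, ∫ y in Ioi 0, x * y * bivariateNormalPDF ρ x y =
      1 / (2 * π * √(1 - ρ ^ 2)) * ((1 - ρ ^ 2) ^ 2 +
        ρ * ∫ x in Ioi 0, x ^ 2 * gaussCdf (1 - ρ ^ 2) (ρ * x) * exp (-x ^ 2 / 2)) := by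
  calc ∫ x in Ioi 0, ∫ y in Ioi 0, x * y * bivariateNormalPDF ρ x y
      = ∫ x in Ioi 0, 1 / (2 * π * √(1 - ρ ^ 2)) *
          ((1 - ρ ^ 2) * (x * exp (-x ^ 2 / (2 * (1 - ρ ^ 2)))) +
            ρ * (x ^ 2 * gaussCdf (1 - ρ ^ 2) (ρ * x) * exp (-x ^ 2 / 2))) := by
        congr! 2 with x
        simp_rw [mul_assoc x, integral_const_mul, integral_Ioi_mul_bivariateNormalPDF hρ]
        ring
    _ = _ := by
        rw [integral_const_mul, integral_add
          ((integrable_mul_exp_neg_sq_div hρ).const_mul _).integrableOn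
          ((integrable_sq_mul_gaussCdf_mul_exp hρ).const_mul _).integrableOn,
          integral_const_mul, integral_const_mul, integral_Ioi_zero_mul_exp_neg_sq_div hρ]
        ring

lemma integral_Ioi_sq_mul_gaussCdf_mul_exp (hρ : 0 < 1 - ρ ^ 2) :
    ∫ x in Ioi 0, x ^ 2 * gaussCdf (1 - ρ ^ 2) (ρ * x) * exp (-x ^ 2 / 2) =
      (∫ x in Ioi 0, gaussCdf (1 - ρ ^ 2) (ρ * x) * exp (-x ^ 2 / 2)) + ρ * (1 - ρ ^ 2) := by
  have hG : ∀ x, HasDerivAt (fun x => gaussCdf (1 - ρ ^ 2) (ρ * x))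
      (ρ * exp (-(ρ * x) ^ 2 / (2 * (1 - ρ ^ 2)))) x := fun x =>
    ((hasDerivAt_gaussCdf hρ (ρ * x)).comp x ((hasDerivAt_id x).const_mul ρ)).congr_deriv
      (by simp [mul_comm])
  have hg : ∀ x, x * (ρ * exp (-(ρ * x) ^ 2 / (2 * (1 - ρ ^ 2)))) * exp (-x ^ 2 / 2) =
      ρ * (x * exp (-x ^ 2 / (2 * (1 - ρ ^ 2)))) := fun x => by
    rw [← exp_neg_sq_div_two_mul_exp_neg_mul_sq_div hρ.ne' x]
    ring
  rw [integral_Ioi_sq_mul_mul_exp_neg_sq_div_two (fun x _ => hG x)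
    (fun x _ => abs_gaussCdf_le hρ (ρ * x))
    (((integrable_mul_exp_neg_sq_div hρ).const_mul ρ).integrableOn.congr_fun
      (fun x _ => (hg x).symm) measurableSet_Ioi)]
  simp_rw [hg, integral_const_mul, integral_Ioi_zero_mul_exp_neg_sq_div hρ]

end BivariateNormal

theorem bivariate_normal_positive_part_moment
    (ρ : ℝ) (hρ : ρ ∈ Set.Ioo (-1 : ℝ) 1) :
    ∫ x in Set.Ioi (0:ℝ), ∫ y in Set.Ioi (0:ℝ),
      x * y * ((1 / (2 * π * Real.sqrt (1 - ρ^2))) *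
        Real.exp (-(x^2 - 2*ρ*x*y + y^2) / (2 * (1 - ρ^2))))
    = (1 / (2 * π)) * Real.sqrt (1 - ρ^2)
      + ρ * ∫ x in Set.Ioi (0:ℝ), ∫ y in Set.Ioi (0:ℝ),
          (1 / (2 * π * Real.sqrt (1 - ρ^2))) *
            Real.exp (-(x^2 - 2*ρ*x*y + y^2) / (2 * (1 - ρ^2))) := by
  have hv : 0 < 1 - ρ ^ 2 := by nlinarith [hρ.1, hρ.2]
  change ∫ x in Ioi 0, ∫ y in Ioi 0, x * y * bivariateNormalPDF ρ x y =
    1 / (2 * π) * √(1 - ρ ^ 2) + ρ * ∫ x in Ioi 0, ∫ y in Ioi 0, bivariateNormalPDF ρ x y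
  rw [integral_Ioi_integral_Ioi_mul_mul_bivariateNormalPDF hv,
    integral_Ioi_sq_mul_gaussCdf_mul_exp hv,
    setIntegral_congr_fun measurableSet_Ioi fun x _ => integral_Ioi_bivariateNormalPDF hv.ne' x,
    integral_const_mul]
  have hsqrt : √(1 - ρ ^ 2) ^ 2 = 1 - ρ ^ 2 := sq_sqrt hv.le
  have hsqrt_pos : 0 < √(1 - ρ ^ 2) := sqrt_pos.2 hv
  field_simp
  linear_combination -hsqrt
end

section
/- For every z > 0, (1/2) ∫₀^∞ t^{−1} e^{−1/t} e^{−z² t / 4} dt = e^{−z} ∫_{−∞}^{∞} e^{−u²} (u² + 2z)^{−1/2} du. (Both sides equal the modified Bessel function K₀(z); this is the key integral representation used in the paper's identity (Bₙ).) -/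
/-!
Both sides are Schläfli's integral `∫ exp (-z cosh θ) dθ` in disguise. On the left, the
substitution `t = (2 / z) e^θ` turns `1 / t + z² t / 4` into `z cosh θ` and `dt / t` into `dθ`.
On the right, `u = √(2z) sinh s` gives `du / √(u² + 2z) = ds`, and
`u² = 2z sinh² s = z (cosh 2s - 1)`, so after `θ = 2s` the right-hand integral becomes
`(e^z / 2) ∫ exp (-z cosh θ) dθ`.
-/

open Real Set MeasureTheory

section Substitution

variable {E : Type*} [NormedAddCommGroup E] [NormedSpace ℝ E]

theorem integral_Ioi_inv_smul_eq_integral_comp_mul_exp {a : ℝ} (ha : 0 < a) (g : ℝ → E) :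
    ∫ t in Ioi 0, t⁻¹ • g t = ∫ θ, g (a * exp θ) := by
  have himage : (fun θ ↦ a * exp θ) '' univ = Ioi 0 := by
    ext t
    refine ⟨fun ⟨θ, _, hθ⟩ ↦ hθ ▸ mem_Ioi.2 (by positivity), fun ht ↦ ⟨log (t / a), trivial, ?_⟩⟩
    dsimp only
    rw [exp_log (div_pos ht ha), mul_div_cancel₀ _ ha.ne']
  rw [← himage, integral_image_eq_integral_abs_deriv_smul MeasurableSet.univ
      (fun θ _ ↦ ((hasDerivAt_exp θ).const_mul a).hasDerivWithinAt)
      (fun _ _ _ _ h ↦ exp_injective (mul_left_cancel₀ ha.ne' h)), setIntegral_univ]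
  congr with θ
  rw [abs_of_pos (by positivity), smul_smul, mul_inv_cancel₀ (by positivity), one_smul]

theorem integral_inv_sqrt_sq_add_sq_smul {c : ℝ} (hc : 0 < c) (g : ℝ → E) :
    ∫ u, (√(u ^ 2 + c ^ 2))⁻¹ • g u = ∫ s, g (c * sinh s) := by
  have himage : (fun s ↦ c * sinh s) '' univ = univ := by
    refine eq_univ_of_forall fun u ↦ ⟨arsinh (u / c), trivial, ?_⟩
    dsimp only
    rw [sinh_arsinh, mul_div_cancel₀ _ hc.ne']
  rw [← setIntegral_univ, ← himage, integral_image_eq_integral_abs_deriv_smul MeasurableSet.univ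
      (fun s _ ↦ ((hasDerivAt_sinh s).const_mul c).hasDerivWithinAt)
      (fun _ _ _ _ h ↦ sinh_injective (mul_left_cancel₀ hc.ne' h)), setIntegral_univ]
  congr with s
  have hsqrt : √((c * sinh s) ^ 2 + c ^ 2) = c * cosh s := by
    rw [← sqrt_sq (by positivity : 0 ≤ c * cosh s), mul_pow, mul_pow, cosh_sq]
    ring_nf
  rw [hsqrt, abs_of_pos (by positivity), smul_smul, mul_inv_cancel₀ (by positivity), one_smul]

end Substitution

theorem integral_Ioi_inv_mul_exp_neg_inv_mul_exp_eq_integral_exp_neg_mul_cosh {z : ℝ}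
    (hz : 0 < z) :
    ∫ t in Ioi 0, t⁻¹ * exp (-1 / t) * exp (-z ^ 2 * t / 4) = ∫ θ, exp (-z * cosh θ) := by
  simp_rw [mul_assoc, ← smul_eq_mul (a := _⁻¹)]
  rw [integral_Ioi_inv_smul_eq_integral_comp_mul_exp (div_pos two_pos hz)]
  congr with θ
  rw [← exp_add, cosh_eq, exp_neg]
  congr 1
  field_simp
  ring

theorem integral_exp_neg_mul_cosh_eq (z : ℝ) :
    ∫ θ, exp (-z * cosh θ) = 2 * exp (-z) * ∫ s, exp (-(2 * z) * sinh s ^ 2) := by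
  have hcosh (s : ℝ) : exp (-z * cosh (2 * s)) = exp (-z) * exp (-(2 * z) * sinh s ^ 2) := by
    rw [← exp_add, cosh_two_mul, cosh_sq']
    ring_nf
  have hscale := Measure.integral_comp_mul_left (fun θ ↦ exp (-z * cosh θ)) 2
  simp only [hcosh, integral_const_mul, smul_eq_mul] at hscale
  rw [abs_of_pos (by norm_num)] at hscale
  linear_combination -2 * hscale

theorem integral_exp_neg_sq_div_sqrt_sq_add {z : ℝ} (hz : 0 < z) :
    ∫ u, exp (-u ^ 2) / √(u ^ 2 + 2 * z) = ∫ s, exp (-(2 * z) * sinh s ^ 2) := by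
  have hc : √(2 * z) ^ 2 = 2 * z := sq_sqrt (by positivity)
  simp_rw [div_eq_inv_mul, ← smul_eq_mul (a := (√_)⁻¹)]
  conv_lhs => enter [2, u]; rw [← hc]
  rw [integral_inv_sqrt_sq_add_sq_smul (sqrt_pos.2 (by positivity))]
  simp_rw [mul_pow, hc, neg_mul]

theorem besselK0_integral_representation (z : ℝ) (hz : 0 < z) :
    (1/2) * ∫ t in Set.Ioi (0:ℝ), t⁻¹ * Real.exp (-1/t) * Real.exp (-z^2 * t / 4)
    = Real.exp (-z) * ∫ u : ℝ, Real.exp (-u^2) / Real.sqrt (u^2 + 2*z) := by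
  rw [integral_Ioi_inv_mul_exp_neg_inv_mul_exp_eq_integral_exp_neg_mul_cosh hz,
    integral_exp_neg_mul_cosh_eq, integral_exp_neg_sq_div_sqrt_sq_add hz]
  ring
end

section
/- For every z > 0, the function φ(z) = ∫₀^∞ t^{−2} e^{−1/t} e^{−z² t / 4} dt is differentiable at z with derivative φ'(z) = −(z/2) ∫₀^∞ t^{−1} e^{−1/t} e^{−z² t / 4} dt. (This is the differentiation-under-the-integral step used to identify ∫₀^∞ t^{−2} e^{−1/t} e^{−z² t/4} dt with z K₁(z).) -/
/-!
With `f t = t⁻² e^{-1/t}`, the integral is `L (z² / 4)` for the Laplace transform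
`L a = ∫₀^∞ f t e^{-a t}`. Both `f` and `t f t = t⁻¹ e^{-1/t}` are bounded on `(0, ∞)`
(by `x ^ n e^{-x} ≤ n!` with `x = 1/t`), so on `a > a₀ / 2` the `a`-derivative
`-t f t e^{-a t}` is dominated by the integrable `C e^{-a₀ t / 2}` and `L` may be
differentiated under the integral sign; the chain rule then supplies the factor `z / 2`.
-/

open Real Set MeasureTheory

lemma pow_mul_exp_neg_le_factorial {x : ℝ} (hx : 0 ≤ x) (n : ℕ) :
    x ^ n * exp (-x) ≤ n.factorial := by
  have h := pow_div_factorial_le_exp x hx n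
  rw [div_le_iff₀ (by positivity)] at h
  calc x ^ n * exp (-x) ≤ exp x * n.factorial * exp (-x) := by gcongr
    _ = n.factorial := by rw [mul_right_comm, ← exp_add, add_neg_cancel, exp_zero, one_mul]

lemma inv_pow_mul_exp_neg_inv_le_factorial {t : ℝ} (ht : 0 ≤ t) (n : ℕ) :
    t⁻¹ ^ n * exp (-1 / t) ≤ n.factorial := by
  rw [neg_div, one_div]
  exact pow_mul_exp_neg_le_factorial (inv_nonneg.2 ht) n

theorem hasDerivAt_integral_Ioi_mul_exp_neg_mul {f : ℝ → ℝ} {C a : ℝ} (ha : 0 < a)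
    (hf : AEStronglyMeasurable f (volume.restrict (Ioi 0)))
    (hf_le : ∀ t ∈ Ioi (0 : ℝ), |f t| ≤ C) (hf_mul_le : ∀ t ∈ Ioi (0 : ℝ), |t * f t| ≤ C) :
    HasDerivAt (fun b => ∫ t in Ioi 0, f t * exp (-b * t))
      (-∫ t in Ioi 0, t * f t * exp (-a * t)) a := by
  have hexp_meas (b : ℝ) : AEStronglyMeasurable (fun t : ℝ => exp (-b * t))
      (volume.restrict (Ioi 0)) := by fun_prop
  have h_int : IntegrableOn (fun t => f t * exp (-a * t)) (Ioi 0) := by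
    refine ((exp_neg_integrableOn_Ioi 0 ha).const_mul C).mono' (hf.mul (hexp_meas a)) ?_
    filter_upwards [ae_restrict_mem measurableSet_Ioi] with t ht
    rw [norm_mul, norm_eq_abs, norm_of_nonneg (exp_pos _).le, neg_mul]
    gcongr
    exact hf_le t ht
  have h_bound : ∀ᵐ t ∂volume.restrict (Ioi 0), ∀ b ∈ Metric.ball a (a / 2),
      ‖-(t * f t * exp (-b * t))‖ ≤ C * exp (-(a / 2) * t) := by
    filter_upwards [ae_restrict_mem measurableSet_Ioi] with t (ht : 0 < t) b hb
    have hb : a / 2 < b := by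
      rw [Metric.mem_ball, dist_eq, abs_sub_lt_iff] at hb; linarith
    rw [norm_neg, norm_mul, norm_eq_abs, norm_of_nonneg (exp_pos _).le]
    have hC : 0 ≤ C := (abs_nonneg _).trans (hf_le 1 (mem_Ioi.2 one_pos))
    gcongr
    exact hf_mul_le t ht
  have h_diff : ∀ᵐ t ∂volume.restrict (Ioi 0), ∀ b ∈ Metric.ball a (a / 2),
      HasDerivAt (fun b => f t * exp (-b * t)) (-(t * f t * exp (-b * t))) b := by
    refine .of_forall fun t b _ => ?_
    exact ((((hasDerivAt_neg b).mul_const t).exp).const_mul (f t)).congr_deriv (by ring)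
  have h := hasDerivAt_integral_of_dominated_loc_of_deriv_le (Metric.ball_mem_nhds a (half_pos ha))
    (Filter.Eventually.of_forall fun b => hf.mul (hexp_meas b)) h_int
    (((measurable_id.aestronglyMeasurable.mul hf).mul (hexp_meas a)).neg) h_bound
    ((exp_neg_integrableOn_Ioi 0 (half_pos ha)).const_mul C) h_diff
  rw [← integral_neg]
  exact h.2

theorem deriv_besselK1_integral (z : ℝ) (hz : 0 < z) :
    HasDerivAt
      (fun s : ℝ => ∫ t in Set.Ioi (0:ℝ), (t⁻¹)^2 * Real.exp (-1/t) * Real.exp (-s^2 * t / 4))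
      (-(z/2) * ∫ t in Set.Ioi (0:ℝ), t⁻¹ * Real.exp (-1/t) * Real.exp (-z^2 * t / 4))
      z := by
  have hf_le (t : ℝ) (ht : 0 < t) : |t⁻¹ ^ 2 * exp (-1 / t)| ≤ 2 := by
    rw [abs_of_nonneg (by positivity)]
    simpa using inv_pow_mul_exp_neg_inv_le_factorial ht.le 2
  have hf_mul_eq (t : ℝ) (ht : 0 < t) :
      t * (t⁻¹ ^ 2 * exp (-1 / t)) = t⁻¹ * exp (-1 / t) := by
    field_simp [ht.ne']
  have hf_mul_le (t : ℝ) (ht : 0 < t) : |t * (t⁻¹ ^ 2 * exp (-1 / t))| ≤ 2 := by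
    rw [hf_mul_eq t ht, abs_of_nonneg (by positivity)]
    linarith [by simpa using inv_pow_mul_exp_neg_inv_le_factorial ht.le 1]
  have hL := hasDerivAt_integral_Ioi_mul_exp_neg_mul (by positivity : 0 < z ^ 2 / 4)
    (by fun_prop : Measurable fun t : ℝ => t⁻¹ ^ 2 * exp (-1 / t)).aestronglyMeasurable
    hf_le hf_mul_le
  have h := hL.comp z ((hasDerivAt_pow 2 z).div_const 4)
  have hexp (s t : ℝ) : exp (-(s ^ 2 / 4) * t) = exp (-s ^ 2 * t / 4) := by ring_nf
  simp only [Function.comp_def, hexp] at h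
  refine h.congr_deriv ?_
  rw [setIntegral_congr_fun measurableSet_Ioi fun t ht => by rw [hf_mul_eq t ht]]
  ring
end

section
/- For every b > 0, ∫₀^π arctan(b / sin(t)) · sin(t) dt = π (1 + b − √(1 + b²)). -/
/-!
On `(0, π)` we have `arctan (b / sin t) = π / 2 - arctan (sin t / b)`, and the right-hand side
extends continuously to all of `ℝ`. Integrating by parts against `-cos t` leaves
`∫ b cos² t / (b² + sin² t) dt`, which is `b t - s φ(t)` with `s = √(1 + b²)` and `φ` the polar
angle of the point `(b cos t, s sin t)` of an ellipse: `φ' = b s / (b² + sin² t)`, and `φ` runs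
from `0` to `π` over `[0, π]`. This gives a primitive continuous on `[0, π]`, and the integrand is
nonnegative there, hence integrable.
-/

open Real Set MeasureTheory Filter Topology

theorem arccos_div_sqrt_sq_add_sq (x : ℝ) {y : ℝ} (hy : 0 < y) :
    arccos (x / √(x ^ 2 + y ^ 2)) = π / 2 - arctan (x / y) := by
  rw [arccos_eq_pi_div_two_sub_arcsin, arctan_eq_arcsin, div_pow, one_add_div (by positivity),
    sqrt_div' _ (sq_nonneg y), sqrt_sq hy.le, add_comm (y ^ 2), div_div_div_cancel_right₀ hy.ne']

/-- The polar angle of the point `(a cos t, c sin t)`, as long as `c sin t ≥ 0`. -/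
noncomputable def ellipseAngle (a c t : ℝ) : ℝ :=
  arccos (a * cos t / √((a * cos t) ^ 2 + (c * sin t) ^ 2))

theorem continuous_ellipseAngle {a c : ℝ} (ha : a ≠ 0) (hc : c ≠ 0) :
    Continuous (ellipseAngle a c) := by
  have hne : ∀ t, √((a * cos t) ^ 2 + (c * sin t) ^ 2) ≠ 0 := by
    intro t
    simp only [ne_eq, sqrt_eq_zero', not_le]
    by_contra! h
    have hcos : a * cos t = 0 := by nlinarith [sq_nonneg (a * cos t), sq_nonneg (c * sin t)]
    have hsin : c * sin t = 0 := by nlinarith [sq_nonneg (a * cos t), sq_nonneg (c * sin t)]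
    simp only [mul_eq_zero, ha, hc, false_or] at hcos hsin
    simpa [hcos, hsin] using sin_sq_add_cos_sq t
  unfold ellipseAngle
  fun_prop (disch := exact hne _)

theorem ellipseAngle_zero {a : ℝ} (ha : 0 < a) (c : ℝ) : ellipseAngle a c 0 = 0 := by
  simp [ellipseAngle, sqrt_sq ha.le, ha.ne']

theorem ellipseAngle_pi {a : ℝ} (ha : 0 < a) (c : ℝ) : ellipseAngle a c π = π := by
  simp [ellipseAngle, sqrt_sq ha.le, ha.ne']

theorem hasDerivAt_ellipseAngle (a : ℝ) {c t : ℝ} (hc : 0 < c) (ht : 0 < sin t) :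
    HasDerivAt (ellipseAngle a c) (a * c / ((a * cos t) ^ 2 + (c * sin t) ^ 2)) t := by
  have heq : (fun τ => π / 2 - arctan (a * cos τ / (c * sin τ))) =ᶠ[𝓝 t] ellipseAngle a c := by
    filter_upwards [(isOpen_lt continuous_const continuous_sin).mem_nhds ht] with τ hτ
    exact (arccos_div_sqrt_sq_add_sq _ (mul_pos hc hτ)).symm
  have hquot : HasDerivAt (fun τ => a * cos τ / (c * sin τ))
      ((a * -sin t * (c * sin t) - a * cos t * (c * cos t)) / (c * sin t) ^ 2) t :=
    ((hasDerivAt_cos t).const_mul a).div ((hasDerivAt_sin t).const_mul c) (mul_pos hc ht).ne'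
  refine ((hquot.arctan.const_sub (π / 2)).congr_of_eventuallyEq heq.symm).congr_deriv ?_
  field_simp
  linear_combination (a * c ^ 2 * sin t ^ 2 + a ^ 3 * cos t ^ 2) * sin_sq_add_cos_sq t

noncomputable def arctanSinPrimitive (b t : ℝ) : ℝ :=
  (arctan (sin t / b) - π / 2) * cos t + b * t - √(1 + b ^ 2) * ellipseAngle b (√(1 + b ^ 2)) t

theorem continuous_arctanSinPrimitive {b : ℝ} (hb : b ≠ 0) :
    Continuous (arctanSinPrimitive b) := by
  have := continuous_ellipseAngle hb (sqrt_pos.2 (by positivity : 0 < 1 + b ^ 2)).ne'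
  unfold arctanSinPrimitive
  fun_prop

theorem arctanSinPrimitive_zero {b : ℝ} (hb : 0 < b) : arctanSinPrimitive b 0 = -(π / 2) := by
  simp [arctanSinPrimitive, ellipseAngle_zero hb]

theorem arctanSinPrimitive_pi {b : ℝ} (hb : 0 < b) :
    arctanSinPrimitive b π = π / 2 + b * π - √(1 + b ^ 2) * π := by
  simp [arctanSinPrimitive, ellipseAngle_pi hb]

theorem hasDerivAt_arctanSinPrimitive {b t : ℝ} (hb : 0 < b) (ht : 0 < sin t) :
    HasDerivAt (arctanSinPrimitive b) (arctan (b / sin t) * sin t) t := by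
  set s := √(1 + b ^ 2)
  have hs_sq : s ^ 2 = 1 + b ^ 2 := sq_sqrt (by positivity)
  have hφ := hasDerivAt_ellipseAngle b (c := s) (sqrt_pos.2 (by positivity)) ht
  have hG := ((((hasDerivAt_sin t).div_const b).arctan.sub_const (π / 2)).mul
    (hasDerivAt_cos t)).add ((hasDerivAt_id t).const_mul b) |>.sub (hφ.const_mul s)
  refine (hG.congr_deriv ?_ : HasDerivAt (arctanSinPrimitive b) _ t)
  have harctan : arctan (b / sin t) = π / 2 - arctan (sin t / b) := by
    rw [← arctan_inv_of_pos (by positivity), inv_div]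
  have hden : (b * cos t) ^ 2 + (s * sin t) ^ 2 = b ^ 2 + sin t ^ 2 := by
    linear_combination hs_sq * sin t ^ 2 + b ^ 2 * cos_sq_add_sin_sq t
  rw [harctan, hden]
  field_simp
  linear_combination 2 * b * cos_sq_add_sin_sq t - 2 * b * hs_sq

theorem integral_arctan_div_sin_mul_sin
    (b : ℝ) (hb : 0 < b) :
    ∫ t in Set.Ioo (0:ℝ) π, Real.arctan (b / Real.sin t) * Real.sin t
    = π * (1 + b - Real.sqrt (1 + b^2)) := by
  have hcont : ContinuousOn (arctanSinPrimitive b) (Icc 0 π) :=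
    (continuous_arctanSinPrimitive hb.ne').continuousOn
  have hderiv : ∀ t ∈ Ioo 0 π, HasDerivAt (arctanSinPrimitive b) (arctan (b / sin t) * sin t) t :=
    fun t ht => hasDerivAt_arctanSinPrimitive hb (sin_pos_of_pos_of_lt_pi ht.1 ht.2)
  have hnonneg : ∀ t ∈ Ioo 0 π, 0 ≤ arctan (b / sin t) * sin t := fun t ht => by
    have hsin := sin_pos_of_pos_of_lt_pi ht.1 ht.2
    exact mul_nonneg (arctan_nonneg.2 (by positivity)) hsin.le
  have hint : IntervalIntegrable (fun t => arctan (b / sin t) * sin t) volume 0 π :=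
    (intervalIntegrable_iff_integrableOn_Ioc_of_le pi_pos.le).2
      (intervalIntegral.integrableOn_deriv_of_nonneg hcont hderiv hnonneg)
  rw [← integral_Ioc_eq_integral_Ioo, ← intervalIntegral.integral_of_le pi_pos.le,
    intervalIntegral.integral_eq_sub_of_hasDerivAt_of_le pi_pos.le hcont hderiv hint,
    arctanSinPrimitive_pi hb, arctanSinPrimitive_zero hb]
  ring
end

section
/- For every k > 0, ∫₀¹ arctan( k / √(u(1 − u)) ) du = (π/2) · (1 + 2k − √(4k² + 1)). In particular, for 0 < l < 1 and k = √l/(1 − l), this integral equals π√l / (1 + √l). -/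
open Real Set MeasureTheory Filter Topology

/-!
Write `k = c / (1 - c²)` with `0 < c < 1` and put `σ = √(u / (1 - u))`. Since
`σ + σ⁻¹ = 1 / √(u (1 - u))`, the addition formula for `arctan` splits the integrand into
`arctan (c σ) + arctan (c / σ)`, which has an elementary primitive in `u`. Its one-sided limits
at `0` and `1` give the value `π c / (1 + c)`. For `k = √l / (1 - l)` one has `c = √l`, and in
general `c = (√(4k² + 1) - 1) / (2k)`.
-/

noncomputable def sqrtOdds (u : ℝ) : ℝ := √(u / (1 - u))

lemma sqrtOdds_pos {u : ℝ} (hu : u ∈ Ioo (0 : ℝ) 1) : 0 < sqrtOdds u :=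
  sqrt_pos.mpr (div_pos hu.1 (sub_pos.mpr hu.2))

lemma sqrtOdds_sq {u : ℝ} (hu : u ∈ Ioo (0 : ℝ) 1) : sqrtOdds u ^ 2 = u / (1 - u) :=
  sq_sqrt (div_pos hu.1 (sub_pos.mpr hu.2)).le

lemma sqrtOdds_add_inv {u : ℝ} (hu : u ∈ Ioo (0 : ℝ) 1) :
    sqrtOdds u + (sqrtOdds u)⁻¹ = (√(u * (1 - u)))⁻¹ := by
  have h1u : 0 < 1 - u := sub_pos.mpr hu.2
  rw [sqrtOdds, sqrt_div hu.1.le, sqrt_mul hu.1.le]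
  have ha := sqrt_pos.mpr hu.1
  have hb := sqrt_pos.mpr h1u
  field_simp
  rw [sq_sqrt hu.1.le, sq_sqrt h1u.le]
  ring

lemma hasDerivAt_sqrtOdds {u : ℝ} (hu : u ∈ Ioo (0 : ℝ) 1) :
    HasDerivAt sqrtOdds ((2 * sqrtOdds u)⁻¹ * ((1 - u) ^ 2)⁻¹) u := by
  have h1u : 1 - u ≠ 0 := (sub_pos.mpr hu.2).ne'
  have hodds : HasDerivAt (fun v : ℝ => v / (1 - v)) (((1 - u) ^ 2)⁻¹) u :=
    ((hasDerivAt_id u).div ((hasDerivAt_id u).const_sub 1) h1u).congr_deriv (by simp)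
  exact ((hasDerivAt_sqrt (div_pos hu.1 (sub_pos.mpr hu.2)).ne').comp u hodds).congr_deriv
    (by rw [sqrtOdds, one_div])

lemma tendsto_sqrtOdds_nhdsGT_zero : Tendsto sqrtOdds (𝓝[>] 0) (𝓝[>] 0) := by
  refine tendsto_nhdsWithin_iff.mpr ⟨?_, ?_⟩
  · have hcont : ContinuousAt sqrtOdds 0 :=
      (continuous_sqrt.tendsto _).comp
        (continuousAt_id.div (continuousAt_const.sub continuousAt_id) (by norm_num))
    simpa [sqrtOdds] using hcont.tendsto.mono_left nhdsWithin_le_nhds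
  · filter_upwards [Ioo_mem_nhdsGT zero_lt_one] with u hu using sqrtOdds_pos hu

lemma tendsto_sqrtOdds_nhdsLT_one : Tendsto sqrtOdds (𝓝[<] 1) atTop := by
  have hsub : Tendsto (fun u : ℝ => 1 - u) (𝓝[<] 1) (𝓝[>] 0) := by
    refine tendsto_nhdsWithin_iff.mpr ⟨?_, ?_⟩
    · simpa using (tendsto_const_nhds.sub tendsto_id : Tendsto (fun u : ℝ => 1 - u) (𝓝 1) _)
        |>.mono_left nhdsWithin_le_nhds
    · filter_upwards [self_mem_nhdsWithin] with u (hu : u < 1) using sub_pos.mpr hu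
  have hodds : Tendsto (fun u : ℝ => u / (1 - u)) (𝓝[<] 1) atTop := by
    simpa [div_eq_mul_inv] using (tendsto_id.mono_left nhdsWithin_le_nhds).pos_mul_atTop
      one_pos hsub.inv_tendsto_nhdsGT_zero
  exact tendsto_sqrt_atTop.comp hodds

lemma arctan_mul_add_arctan_div {c s : ℝ} (hc : c ^ 2 < 1) (hs : s ≠ 0) :
    arctan (c * s) + arctan (c / s) = arctan (c / (1 - c ^ 2) * (s + s⁻¹)) := by
  rw [arctan_add (by rwa [mul_div_assoc', mul_div_right_comm, mul_div_cancel_right₀ _ hs, ← sq])]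
  have : 1 - c ^ 2 ≠ 0 := (sub_pos.mpr hc).ne'
  congr 1
  field_simp

/-- With `σ = sqrtOdds u`, i.e. `u = σ² / (1 + σ²)`, and `a = (1 - c²)⁻¹`, the coefficients satisfy
`(u - a) / (1 + c²σ²) = -a / (1 + σ²)` and `(u - 1 + a) / (σ² + c²) = a / (1 + σ²)`, so all terms
of the derivative involving `σ'` cancel. -/
noncomputable def arctanPrimitive (c u : ℝ) : ℝ :=
  (u - (1 - c ^ 2)⁻¹) * arctan (c * sqrtOdds u)
    + (u - 1 + (1 - c ^ 2)⁻¹) * arctan (c / sqrtOdds u)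
    + 2 * c * (1 - c ^ 2)⁻¹ * arctan (sqrtOdds u)

lemma hasDerivAt_arctanPrimitive {c u : ℝ} (hc : c ^ 2 ≠ 1) (hu : u ∈ Ioo (0 : ℝ) 1) :
    HasDerivAt (arctanPrimitive c) (arctan (c * sqrtOdds u) + arctan (c / sqrtOdds u)) u := by
  have hs := hasDerivAt_sqrtOdds hu
  have hσ := sqrtOdds_pos hu
  have hmul := (hasDerivAt_arctan _).comp u (hs.const_mul c)
  have hdiv := (hasDerivAt_arctan _).comp u ((hasDerivAt_const u c).div hs hσ.ne')
  have hσ' := (hasDerivAt_arctan _).comp u hs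
  refine (((((hasDerivAt_id u).sub_const _).mul hmul).add
    ((((hasDerivAt_id u).sub_const 1).add_const _).mul hdiv)).add
    (hσ'.const_mul _)).congr_deriv ?_
  have hu' : u = sqrtOdds u ^ 2 / (1 + sqrtOdds u ^ 2) := by
    rw [sqrtOdds_sq hu]
    field_simp [(sub_pos.mpr hu.2).ne']
    ring
  have h1c : 1 - c ^ 2 ≠ 0 := sub_ne_zero.mpr (Ne.symm hc)
  simp only [id, Function.comp_apply, Pi.div_apply]
  generalize sqrtOdds u = σ at hσ hu' ⊢
  subst hu'
  field_simp
  ring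

lemma tendsto_arctanPrimitive {c u₀ A B S : ℝ} {l : Filter ℝ} (hu : Tendsto id l (𝓝 u₀))
    (hA : Tendsto (fun u => arctan (c * sqrtOdds u)) l (𝓝 A))
    (hB : Tendsto (fun u => arctan (c / sqrtOdds u)) l (𝓝 B))
    (hS : Tendsto (fun u => arctan (sqrtOdds u)) l (𝓝 S)) :
    Tendsto (arctanPrimitive c) l
      (𝓝 ((u₀ - (1 - c ^ 2)⁻¹) * A + (u₀ - 1 + (1 - c ^ 2)⁻¹) * B
        + 2 * c * (1 - c ^ 2)⁻¹ * S)) :=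
  (((hu.sub_const _).mul hA).add (((hu.sub_const 1).add_const _).mul hB)).add (hS.const_mul _)

lemma tendsto_arctanPrimitive_nhdsGT_zero {c : ℝ} (hc : 0 < c) :
    Tendsto (arctanPrimitive c) (𝓝[>] 0)
      (𝓝 ((0 - (1 - c ^ 2)⁻¹) * 0 + (0 - 1 + (1 - c ^ 2)⁻¹) * (π / 2)
        + 2 * c * (1 - c ^ 2)⁻¹ * 0)) := by
  have hs := tendsto_sqrtOdds_nhdsGT_zero
  have hs0 : Tendsto sqrtOdds (𝓝[>] 0) (𝓝 0) := tendsto_nhds_of_tendsto_nhdsWithin hs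
  have harctan := continuous_arctan.tendsto' 0 0 arctan_zero
  refine tendsto_arctanPrimitive (tendsto_id.mono_left nhdsWithin_le_nhds) ?_ ?_ ?_
  · exact harctan.comp (by simpa using hs0.const_mul c)
  · exact tendsto_nhds_of_tendsto_nhdsWithin (tendsto_arctan_atTop.comp
      (by simpa [div_eq_mul_inv] using hs.inv_tendsto_nhdsGT_zero.const_mul_atTop hc))
  · exact harctan.comp hs0

lemma tendsto_arctanPrimitive_nhdsLT_one {c : ℝ} (hc : 0 < c) :
    Tendsto (arctanPrimitive c) (𝓝[<] 1)
      (𝓝 ((1 - (1 - c ^ 2)⁻¹) * (π / 2) + (1 - 1 + (1 - c ^ 2)⁻¹) * 0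
        + 2 * c * (1 - c ^ 2)⁻¹ * (π / 2))) := by
  have hs := tendsto_sqrtOdds_nhdsLT_one
  have harctan := tendsto_nhds_of_tendsto_nhdsWithin tendsto_arctan_atTop
  refine tendsto_arctanPrimitive (tendsto_id.mono_left nhdsWithin_le_nhds) ?_ ?_ ?_
  · exact harctan.comp (hs.const_mul_atTop hc)
  · have hdiv : Tendsto (fun u => c / sqrtOdds u) (𝓝[<] 1) (𝓝 0) := by
      simpa [div_eq_mul_inv] using hs.inv_tendsto_atTop.const_mul c
    exact (continuous_arctan.tendsto' 0 0 arctan_zero).comp hdiv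
  · exact harctan.comp hs

lemma intervalIntegrable_arctan_comp {f : ℝ → ℝ} (hf : Measurable f) (a b : ℝ) :
    IntervalIntegrable (fun x => arctan (f x)) volume a b := by
  refine intervalIntegrable_iff.mpr (Measure.integrableOn_of_bounded (M := π / 2)
    measure_Ioc_lt_top.ne (continuous_arctan.measurable.comp hf).aestronglyMeasurable
    (ae_of_all _ fun x => ?_))
  rw [norm_eq_abs, abs_le]
  exact ⟨(neg_pi_div_two_lt_arctan _).le, (arctan_lt_pi_div_two _).le⟩

theorem integral_arctan_div_sqrt_mul_one_sub {c : ℝ} (hc0 : 0 < c) (hc1 : c < 1) :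
    ∫ u in Ioo (0 : ℝ) 1, arctan (c / (1 - c ^ 2) / √(u * (1 - u))) = π * c / (1 + c) := by
  have hc2 : c ^ 2 < 1 := by nlinarith
  have hderiv : ∀ u ∈ Ioo (0 : ℝ) 1,
      HasDerivAt (arctanPrimitive c) (arctan (c / (1 - c ^ 2) / √(u * (1 - u)))) u := by
    intro u hu
    rw [div_eq_mul_inv _ √_, ← sqrtOdds_add_inv hu,
      ← arctan_mul_add_arctan_div hc2 (sqrtOdds_pos hu).ne']
    exact hasDerivAt_arctanPrimitive hc2.ne hu
  rw [← integral_Ioc_eq_integral_Ioo, ← intervalIntegral.integral_of_le zero_le_one,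
    intervalIntegral.integral_eq_sub_of_hasDerivAt_of_tendsto zero_lt_one hderiv
      (intervalIntegrable_arctan_comp (by fun_prop) 0 1)
      (tendsto_arctanPrimitive_nhdsGT_zero hc0) (tendsto_arctanPrimitive_nhdsLT_one hc0)]
  have : 1 - c ^ 2 ≠ 0 := (sub_pos.mpr hc2).ne'
  have : 1 + c ≠ 0 := by positivity
  field_simp
  ring

lemma exists_div_one_sub_sq_eq {k : ℝ} (hk : 0 < k) : ∃ c, 0 < c ∧ c < 1 ∧
    c / (1 - c ^ 2) = k ∧ c / (1 + c) = (1 + 2 * k - √(4 * k ^ 2 + 1)) / 2 := by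
  set D := √(4 * k ^ 2 + 1)
  have hD2 : D ^ 2 = 4 * k ^ 2 + 1 := sq_sqrt (by positivity)
  have hD0 : 0 ≤ D := sqrt_nonneg _
  obtain ⟨c, hD⟩ : ∃ c, D = 2 * k * c + 1 := ⟨(D - 1) / (2 * k), by field_simp; ring⟩
  have hquad : k * (1 - c ^ 2) = c := by
    refine mul_left_cancel₀ (by positivity : 4 * k ≠ 0) ?_
    linear_combination (-1) * hD2 + (D + 2 * k * c + 1) * hD
  have hc0 : 0 < c := by nlinarith
  have hc1 : c < 1 := by nlinarith
  refine ⟨c, hc0, hc1, ?_, ?_⟩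
  · rw [div_eq_iff (by nlinarith)]
    linarith
  · rw [div_eq_div_iff (by positivity) two_ne_zero]
    linear_combination (-2) * hquad + (1 + c) * hD

theorem integral_arctan_sqrt_u_one_sub_u :
    (∀ k : ℝ, 0 < k →
      ∫ u in Set.Ioo (0:ℝ) 1, Real.arctan (k / Real.sqrt (u * (1 - u)))
        = (π / 2) * (1 + 2*k - Real.sqrt (4*k^2 + 1))) ∧
    (∀ l : ℝ, 0 < l → l < 1 →
      ∫ u in Set.Ioo (0:ℝ) 1,
          Real.arctan ((Real.sqrt l / (1 - l)) / Real.sqrt (u * (1 - u)))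
        = π * Real.sqrt l / (1 + Real.sqrt l)) := by
  refine ⟨fun k hk => ?_, fun l hl0 hl1 => ?_⟩
  · obtain ⟨c, hc0, hc1, rfl, hc⟩ := exists_div_one_sub_sq_eq hk
    rw [integral_arctan_div_sqrt_mul_one_sub hc0 hc1, mul_div_assoc, hc]
    ring
  · have hc1 : √l < 1 := (sqrt_lt' one_pos).mpr (by simpa using hl1)
    simpa only [sq_sqrt hl0.le] using integral_arctan_div_sqrt_mul_one_sub (sqrt_pos.mpr hl0) hc1
end

section
/- For every l ∈ (0, 1), ∫₀^{1−l} ( √( l / (x(1 − l − x)) ) − arctan( √( l / (x(1 − l − x)) ) ) ) dx = π l. (Equivalently, the length L₁ of the segment of the concave majorant of a standard Brownian bridge covering an independent uniform point has density f_{L₁}(l) = 1 on (0,1), i.e. L₁ is uniformly distributed.) -/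
/-!
For `a > 0` the integrand `√(l/(x(a-x))) - arctan √(l/(x(a-x)))` has an explicit primitive `G` on
`(0, a)`, odd under `x ↦ a - x`, with one-sided limits `∓π(c - a)/4` at the endpoints, where
`c = √(a² + 4l)`. The integrand is nonnegative, so these finite limits make it integrable, and the
fundamental theorem of calculus gives `π(c - a)/2`; for `a = 1 - l` one has `c = 1 + l`.
-/

open Real Set MeasureTheory Filter Topology

theorem HasDerivAt.arctan_div {p q : ℝ → ℝ} {p' q' x : ℝ} (hp : HasDerivAt p p' x)
    (hq : HasDerivAt q q' x) (hx : q x ≠ 0) :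
    HasDerivAt (fun y => Real.arctan (p y / q y))
      ((p' * q x - p x * q') / (q x ^ 2 + p x ^ 2)) x := by
  convert (hp.fun_div hq hx).arctan using 1
  field_simp

theorem Real.arctan_le_self {t : ℝ} (ht : 0 ≤ t) : arctan t ≤ t :=
  calc arctan t ≤ tan (arctan t) := le_tan (arctan_nonneg.2 ht) (arctan_lt_pi_div_two t)
    _ = t := tan_arctan t

theorem intervalIntegrable_deriv_of_nonneg_of_tendsto {f f' : ℝ → ℝ} {a b fa fb : ℝ}
    (hab : a < b) (hderiv : ∀ x ∈ Ioo a b, HasDerivAt f (f' x) x)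
    (hpos : ∀ x ∈ Ioo a b, 0 ≤ f' x) (ha : Tendsto f (𝓝[>] a) (𝓝 fa))
    (hb : Tendsto f (𝓝[<] b) (𝓝 fb)) : IntervalIntegrable f' volume a b := by
  have hcont : ContinuousOn f (Ioo a b) := fun x hx => (hderiv x hx).continuousAt.continuousWithinAt
  have hext (x : ℝ) (hx : x ∈ Ioo a b) : extendFrom (Ioo a b) f =ᶠ[𝓝 x] f := by
    filter_upwards [Ioo_mem_nhds hx.1 hx.2] with y hy using extendFrom_extends hcont y hy
  refine (intervalIntegrable_iff_integrableOn_Ioc_of_le hab.le).2 ?_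
  exact intervalIntegral.integrableOn_deriv_of_nonneg (continuousOn_Icc_extendFrom_Ioo hcont ha hb)
    (fun x hx => (hderiv x hx).congr_of_eventuallyEq (hext x hx)) hpos

noncomputable def sqrtSubArctanPrimitive (a l x : ℝ) : ℝ :=
  (a / 2 - x) * arctan (√l / √(x * (a - x)))
    - √(a ^ 2 + 4 * l) / 2 * arctan (√l * (a - 2 * x) / (√(a ^ 2 + 4 * l) * √(x * (a - x))))

theorem sqrtSubArctanPrimitive_sub_left (a l x : ℝ) :
    sqrtSubArctanPrimitive a l (a - x) = -sqrtSubArctanPrimitive a l x := by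
  have hprod : (a - x) * (a - (a - x)) = x * (a - x) := by ring
  have hlin : a - 2 * (a - x) = -(a - 2 * x) := by ring
  simp only [sqrtSubArctanPrimitive, hprod, hlin, mul_neg, neg_div, arctan_neg]
  ring

section

variable {a l x : ℝ}

theorem hasDerivAt_sqrt_mul_sub (hx : x ∈ Ioo 0 a) :
    HasDerivAt (fun y => √(y * (a - y))) ((a - 2 * x) / (2 * √(x * (a - x)))) x := by
  have hpoly : HasDerivAt (fun y => y * (a - y)) (a - 2 * x) x :=
    ((hasDerivAt_id' x).fun_mul ((hasDerivAt_const x a).fun_sub (hasDerivAt_id' x))).congr_deriv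
      (by ring)
  exact hpoly.sqrt (mul_pos hx.1 (sub_pos.2 hx.2)).ne'

theorem hasDerivAt_sqrtSubArctanPrimitive (hl : 0 ≤ l) (hx : x ∈ Ioo 0 a) :
    HasDerivAt (sqrtSubArctanPrimitive a l)
      (√(l / (x * (a - x))) - arctan √(l / (x * (a - x)))) x := by
  have hxa : 0 < x * (a - x) := mul_pos hx.1 (sub_pos.2 hx.2)
  have ha : 0 < a := hx.1.trans hx.2
  set m := √l
  set s := √(x * (a - x))
  set c := √(a ^ 2 + 4 * l)
  have hs : 0 < s := sqrt_pos.2 hxa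
  have hs2 : s ^ 2 = x * (a - x) := sq_sqrt hxa.le
  have hc2 : c ^ 2 = a ^ 2 + 4 * m ^ 2 := by rw [sq_sqrt (by positivity), sq_sqrt hl]
  have hsm : s ^ 2 + m ^ 2 ≠ 0 := by positivity
  have hsd : HasDerivAt (fun y => √(y * (a - y))) ((a - 2 * x) / (2 * s)) x :=
    hasDerivAt_sqrt_mul_sub hx
  have h₁ : HasDerivAt (fun y => arctan (m / √(y * (a - y))))
      (-(m * (a - 2 * x)) / (2 * s * (s ^ 2 + m ^ 2))) x := by
    convert (hasDerivAt_const x m).arctan_div hsd hs.ne' using 1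
    field_simp
    ring
  have h₂ : HasDerivAt (fun y => arctan (m * (a - 2 * y) / (c * √(y * (a - y)))))
      (-(m * c) / (2 * s * (s ^ 2 + m ^ 2))) x := by
    have hnum : HasDerivAt (fun y => m * (a - 2 * y)) (m * (-2)) x := by
      simpa using ((hasDerivAt_id x).const_mul 2).const_sub a |>.const_mul m
    have hc : 0 < c := sqrt_pos.2 (by positivity)
    convert hnum.arctan_div (hsd.const_mul c) (by positivity) using 1
    -- this factorisation is what the constant `c = √(a² + 4l)` is chosen for
    have hden : (c * s) ^ 2 + (m * (a - 2 * x)) ^ 2 = a ^ 2 * (s ^ 2 + m ^ 2) := by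
      linear_combination s ^ 2 * hc2 + 4 * m ^ 2 * hs2
    rw [hden]
    field_simp
    linear_combination (4 * m) * hs2
  have hsplit : √(l / (x * (a - x))) = m / s := sqrt_div' l hxa.le
  refine (((hasDerivAt_id' x).const_sub (a / 2)).mul h₁ |>.sub (h₂.const_mul (c / 2))).congr_deriv ?_
  rw [hsplit]
  field_simp
  linear_combination (-4 * m) * hs2 + m * hc2

theorem tendsto_arctan_div_of_tendsto_nhdsGT_zero {α : Type*} {F : Filter α} {f g : α → ℝ}
    {C : ℝ} (hC : 0 < C) (hf : Tendsto f F (𝓝 C)) (hg : Tendsto g F (𝓝[>] 0)) :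
    Tendsto (fun x => arctan (f x / g x)) F (𝓝 (π / 2)) := by
  simp only [div_eq_mul_inv]
  exact (tendsto_arctan_atTop.mono_right nhdsWithin_le_nhds).comp
    (hf.pos_mul_atTop hC hg.inv_tendsto_nhdsGT_zero)

theorem tendsto_sqrtSubArctanPrimitive_nhdsGT_zero (ha : 0 < a) (hl : 0 < l) :
    Tendsto (sqrtSubArctanPrimitive a l) (𝓝[>] 0) (𝓝 (π * (a - √(a ^ 2 + 4 * l)) / 4)) := by
  set c := √(a ^ 2 + 4 * l)
  have hc : 0 < c := sqrt_pos.2 (by positivity)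
  have hs : Tendsto (fun x => √(x * (a - x))) (𝓝[>] 0) (𝓝[>] 0) := by
    refine tendsto_nhdsWithin_iff.2 ⟨?_, ?_⟩
    · have hcont : Continuous (fun x : ℝ => √(x * (a - x))) := by fun_prop
      exact (hcont.tendsto' 0 0 (by simp)).mono_left nhdsWithin_le_nhds
    · filter_upwards [Ioo_mem_nhdsGT ha] with x hx
      exact sqrt_pos.2 (mul_pos hx.1 (sub_pos.2 hx.2))
  have hx : Tendsto (fun x : ℝ => x) (𝓝[>] 0) (𝓝 0) := nhdsWithin_le_nhds
  have h₁ := tendsto_arctan_div_of_tendsto_nhdsGT_zero (sqrt_pos.2 hl) tendsto_const_nhds hs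
  have hf : Tendsto (fun x => √l * (a - 2 * x) / c) (𝓝[>] 0) (𝓝 (√l * a / c)) := by
    have hcont : Continuous (fun x => √l * (a - 2 * x) / c) := by fun_prop
    exact (hcont.tendsto' 0 _ (by simp)).mono_left nhdsWithin_le_nhds
  have h₂ := tendsto_arctan_div_of_tendsto_nhdsGT_zero (by positivity) hf hs
  simp only [← div_mul_eq_div_div] at h₂
  rw [show π * (a - c) / 4 = (a / 2 - 0) * (π / 2) - c / 2 * (π / 2) by ring]
  exact ((hx.const_sub (a / 2)).mul h₁).sub (h₂.const_mul (c / 2))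

theorem tendsto_sqrtSubArctanPrimitive_nhdsLT (ha : 0 < a) (hl : 0 < l) :
    Tendsto (sqrtSubArctanPrimitive a l) (𝓝[<] a) (𝓝 (π * (√(a ^ 2 + 4 * l) - a) / 4)) := by
  have hreflect : Tendsto (fun x => a - x) (𝓝[<] a) (𝓝[>] 0) := by
    have h := (map_subLeft_nhdsLT (c := a) (a := a)).le
    rwa [sub_self] at h
  have h := ((tendsto_sqrtSubArctanPrimitive_nhdsGT_zero ha hl).comp hreflect).neg
  convert h using 2 with x
  · simp [sqrtSubArctanPrimitive_sub_left]
  · ring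

theorem integral_sqrt_sub_arctan (ha : 0 < a) (hl : 0 < l) :
    ∫ x in Ioo 0 a, (√(l / (x * (a - x))) - arctan √(l / (x * (a - x))))
      = π * (√(a ^ 2 + 4 * l) - a) / 2 := by
  have hderiv (x : ℝ) (hx : x ∈ Ioo 0 a) := hasDerivAt_sqrtSubArctanPrimitive hl.le hx
  have h₀ := tendsto_sqrtSubArctanPrimitive_nhdsGT_zero ha hl
  have h₁ := tendsto_sqrtSubArctanPrimitive_nhdsLT ha hl
  have hint := intervalIntegrable_deriv_of_nonneg_of_tendsto ha hderiv
    (fun _ _ => sub_nonneg.2 (arctan_le_self (sqrt_nonneg _))) h₀ h₁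
  rw [← integral_Ioc_eq_integral_Ioo, ← intervalIntegral.integral_of_le ha.le,
    intervalIntegral.integral_eq_sub_of_hasDerivAt_of_tendsto ha hderiv hint h₀ h₁]
  ring

end

theorem length_first_segment_uniform
    (l : ℝ) (hl : 0 < l) (hl1 : l < 1) :
    ∫ x in Set.Ioo (0:ℝ) (1 - l),
        (Real.sqrt (l / (x * (1 - l - x)))
          - Real.arctan (Real.sqrt (l / (x * (1 - l - x)))))
    = π * l := by
  have hsq : √((1 - l) ^ 2 + 4 * l) = 1 + l := by
    rw [show (1 - l) ^ 2 + 4 * l = (1 + l) ^ 2 by ring, sqrt_sq (by linarith)]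
  rw [integral_sqrt_sub_arctan (sub_pos.2 hl1) hl, hsq]
  ring
end
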